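/- Let fₙ : ℝ → ℝ be a sequence of concave functions converging pointwise to a function f : ℝ → ℝ that has a unique maximizer θ* and is strictly concave. If θ̂ₙ is any maximizer of fₙ, then θ̂ₙ → θ*. -/

import Mathlib

/-!
If `θ̂ₙ` were at distance `≥ ε` from `θ*`, one of `θ* ± ε` would lie between `θ*` and the
maximizer `θ̂ₙ`, so concavity would give `fₙ (θ* ± ε) ≥ fₙ θ*`. Since `f (θ* ± ε) < f θ*`, the
pointwise limit rules this out for all large `n`.
-/

open Filter

theorem ConcaveOn.dist_lt_of_forall_le {g : ℝ → ℝ} (hg : ConcaveOn ℝ Set.univ g) {x c ε : ℝ}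
    (hε : 0 < ε) (hx : ∀ y, g y ≤ g x) (hleft : g (c - ε) < g c) (hright : g (c + ε) < g c) :
    dist x c < ε := by
  have le_of_mem_segment : ∀ z ∈ segment ℝ c x, g c ≤ g z := fun z hz => by
    simpa [min_eq_left (hx c)] using hg.ge_on_segment trivial trivial hz
  rw [Real.dist_eq, abs_lt]
  constructor <;> by_contra! hfar
  · have := le_of_mem_segment (c - ε) <| by
      rw [segment_symm, segment_eq_Icc (by linarith)]
      constructor <;> linarith
    linarith
  · have := le_of_mem_segment (c + ε) <| by
      rw [segment_eq_Icc (by linarith)]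
      constructor <;> linarith
    linarith

theorem stmt_11_general (f : ℝ → ℝ) (fn : ℕ → ℝ → ℝ)
    (hconc : ∀ n, ConcaveOn ℝ Set.univ (fn n))
    (hlim : ∀ θ : ℝ, Tendsto (fun n => fn n θ) atTop (nhds (f θ)))
    (θstar : ℝ)
    (hmax : ∀ θ : ℝ, f θ ≤ f θstar)
    (huniq : ∀ θ : ℝ, f θ = f θstar → θ = θstar)
    (θhat : ℕ → ℝ)
    (hhat : ∀ n, ∀ θ : ℝ, fn n θ ≤ fn n (θhat n)) :
    Tendsto θhat atTop (nhds θstar) := by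
  have gap : ∀ θ, θ ≠ θstar → f θ < f θstar := fun θ hθ =>
    (hmax θ).lt_of_ne fun h => hθ (huniq θ h)
  refine Metric.tendsto_nhds.2 fun ε hε => ?_
  filter_upwards [(hlim _).eventually_lt (hlim θstar) (gap (θstar - ε) (by linarith)),
    (hlim _).eventually_lt (hlim θstar) (gap (θstar + ε) (by linarith))] with n hleft hright
  exact (hconc n).dist_lt_of_forall_le hε (hhat n) hleft hright

theorem stmt_11 (f : ℝ → ℝ) (fn : ℕ → ℝ → ℝ)
    (hconc : ∀ n, ConcaveOn ℝ Set.univ (fn n))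
    (hlim : ∀ θ : ℝ, Tendsto (fun n => fn n θ) atTop (nhds (f θ)))
    (hstrict : StrictConcaveOn ℝ Set.univ f)
    (θstar : ℝ)
    (hmax : ∀ θ : ℝ, f θ ≤ f θstar)
    (huniq : ∀ θ : ℝ, f θ = f θstar → θ = θstar)
    (θhat : ℕ → ℝ)
    (hhat : ∀ n, ∀ θ : ℝ, fn n θ ≤ fn n (θhat n)) :
    Tendsto θhat atTop (nhds θstar) :=
  stmt_11_general f fn hconc hlim θstar hmax huniq θhat hhat
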